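/- arXiv:2412.13306 — 3 statements merged into one kernel-verified Lean document; each statement's English description precedes it below -/
import Mathlib

section
/- For the action α₄ of (ℝ,+) on ℝ² given by α₄(t,(x,y)) = (eᵗ(x·cos t − y·sin t), eᵗ(x·sin t + y·cos t)), define on ℝ² ∖ {(0,0)}, with r = √(x²+y²), the functions ιx(x,y) = (x·cos(ln r) + y·sin(ln r))/r and ιy(x,y) = (y·cos(ln r) − x·sin(ln r))/r. Then ιx and ιy are invariant under α₄, i.e. ιx(α₄(t,p)) = ιx(p) and ιy(α₄(t,p)) = ιy(p) for all t ∈ ℝ and all p ≠ (0,0), and they satisfy the syzygy ιx(p)² + ιy(p)² = 1 for all p ≠ (0,0). -/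
/-! (ιx, ιy) is the unit vector p / r rotated by the angle -ln r. The action α₄ rotates p by t
and multiplies r by eᵗ, so it adds t to ln r, and the extra rotation by -t cancels the rotation
by t. A rotated unit vector is still a unit vector, which is the syzygy. -/

/-- The spiral action α₄ of (ℝ,+) on ℝ². -/
noncomputable def alpha4 (t : ℝ) (p : ℝ × ℝ) : ℝ × ℝ :=
  (Real.exp t * (p.1 * Real.cos t - p.2 * Real.sin t),
   Real.exp t * (p.1 * Real.sin t + p.2 * Real.cos t))

/-- ιx(x,y) = (x·cos(ln r) + y·sin(ln r))/r with r = √(x²+y²). -/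
noncomputable def iotaX (p : ℝ × ℝ) : ℝ :=
  (p.1 * Real.cos (Real.log (Real.sqrt (p.1 ^ 2 + p.2 ^ 2))) +
   p.2 * Real.sin (Real.log (Real.sqrt (p.1 ^ 2 + p.2 ^ 2)))) /
    Real.sqrt (p.1 ^ 2 + p.2 ^ 2)

/-- ιy(x,y) = (y·cos(ln r) − x·sin(ln r))/r with r = √(x²+y²). -/
noncomputable def iotaY (p : ℝ × ℝ) : ℝ :=
  (p.2 * Real.cos (Real.log (Real.sqrt (p.1 ^ 2 + p.2 ^ 2))) -
   p.1 * Real.sin (Real.log (Real.sqrt (p.1 ^ 2 + p.2 ^ 2)))) /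
    Real.sqrt (p.1 ^ 2 + p.2 ^ 2)

open Real

lemma sq_add_sq_pos_of_ne_zero {p : ℝ × ℝ} (hp : p ≠ (0, 0)) : 0 < p.1 ^ 2 + p.2 ^ 2 := by
  refine (add_nonneg (sq_nonneg _) (sq_nonneg _)).lt_of_ne' fun h => hp ?_
  rw [sq, sq, mul_self_add_mul_self_eq_zero] at h
  exact Prod.ext h.1 h.2

section Rotation

variable (x y s θ : ℝ)

lemma rotate_mul_cos_add_mul_sin :
    (x * cos s - y * sin s) * cos (s + θ) + (x * sin s + y * cos s) * sin (s + θ) =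
      x * cos θ + y * sin θ := by
  rw [cos_add, sin_add]
  linear_combination (x * cos θ + y * sin θ) * sin_sq_add_cos_sq s

lemma rotate_mul_cos_sub_mul_sin :
    (x * sin s + y * cos s) * cos (s + θ) - (x * cos s - y * sin s) * sin (s + θ) =
      y * cos θ - x * sin θ := by
  rw [cos_add, sin_add]
  linear_combination (y * cos θ - x * sin θ) * sin_sq_add_cos_sq s

lemma rotate_sq_add_sq :
    (x * cos θ + y * sin θ) ^ 2 + (y * cos θ - x * sin θ) ^ 2 = x ^ 2 + y ^ 2 := by
  linear_combination (x ^ 2 + y ^ 2) * sin_sq_add_cos_sq θ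

end Rotation

lemma sqrt_alpha4 (t : ℝ) (p : ℝ × ℝ) :
    √((alpha4 t p).1 ^ 2 + (alpha4 t p).2 ^ 2) = exp t * √(p.1 ^ 2 + p.2 ^ 2) := by
  have hsq : (alpha4 t p).1 ^ 2 + (alpha4 t p).2 ^ 2 = exp t ^ 2 * (p.1 ^ 2 + p.2 ^ 2) := by
    simp only [alpha4]
    linear_combination exp t ^ 2 * (p.1 ^ 2 + p.2 ^ 2) * sin_sq_add_cos_sq t
  rw [hsq, sqrt_mul (by positivity), sqrt_sq (exp_pos t).le]

lemma log_sqrt_alpha4 (t : ℝ) {p : ℝ × ℝ} (hp : p ≠ (0, 0)) :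
    log √((alpha4 t p).1 ^ 2 + (alpha4 t p).2 ^ 2) = t + log √(p.1 ^ 2 + p.2 ^ 2) := by
  have hr : √(p.1 ^ 2 + p.2 ^ 2) ≠ 0 := (sqrt_pos.mpr (sq_add_sq_pos_of_ne_zero hp)).ne'
  rw [sqrt_alpha4, log_mul (exp_ne_zero t) hr, log_exp]

lemma iotaX_alpha4 (t : ℝ) {p : ℝ × ℝ} (hp : p ≠ (0, 0)) : iotaX (alpha4 t p) = iotaX p := by
  rw [iotaX, iotaX, log_sqrt_alpha4 t hp, sqrt_alpha4, ← rotate_mul_cos_add_mul_sin p.1 p.2 t,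
    ← mul_div_mul_left _ √(p.1 ^ 2 + p.2 ^ 2) (exp_ne_zero t)]
  simp only [alpha4]
  ring

lemma iotaY_alpha4 (t : ℝ) {p : ℝ × ℝ} (hp : p ≠ (0, 0)) : iotaY (alpha4 t p) = iotaY p := by
  rw [iotaY, iotaY, log_sqrt_alpha4 t hp, sqrt_alpha4, ← rotate_mul_cos_sub_mul_sin p.1 p.2 t,
    ← mul_div_mul_left _ √(p.1 ^ 2 + p.2 ^ 2) (exp_ne_zero t)]
  simp only [alpha4]
  ring

lemma iotaX_sq_add_iotaY_sq {p : ℝ × ℝ} (hp : p ≠ (0, 0)) : iotaX p ^ 2 + iotaY p ^ 2 = 1 := by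
  have hpos := sq_add_sq_pos_of_ne_zero hp
  rw [iotaX, iotaY, div_pow, div_pow, ← add_div, rotate_sq_add_sq, sq_sqrt hpos.le,
    div_self hpos.ne']

/-- ιx and ιy are invariant under α₄ on ℝ² ∖ {(0,0)} and satisfy the syzygy
ιx² + ιy² = 1. -/
theorem stmt_6 :
    (∀ t : ℝ, ∀ p : ℝ × ℝ, p ≠ (0, 0) →
      iotaX (alpha4 t p) = iotaX p ∧ iotaY (alpha4 t p) = iotaY p) ∧
    (∀ p : ℝ × ℝ, p ≠ (0, 0) → iotaX p ^ 2 + iotaY p ^ 2 = 1) :=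
  ⟨fun t _ hp => ⟨iotaX_alpha4 t hp, iotaY_alpha4 t hp⟩, fun _ hp => iotaX_sq_add_iotaY_sq hp⟩
end

section
/- The pair of invariants ιx(x,y) = (x·cos(ln r) + y·sin(ln r))/r and ιy(x,y) = (y·cos(ln r) − x·sin(ln r))/r, where r = √(x²+y²), separates the orbits of the spiral action α₄ on ℝ² ∖ {(0,0)}: if p, q ≠ (0,0) satisfy ιx(p) = ιx(q) and ιy(p) = ιy(q), then there exists t ∈ ℝ with α₄(t,p) = q. -/
/-- The pair (ιx, ιy) separates the orbits of the spiral action α₄ on ℝ² ∖ {(0,0)}. -/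
theorem stmt_7 (p q : ℝ × ℝ) (hp : p ≠ (0, 0)) (hq : q ≠ (0, 0))
    (hx : iotaX p = iotaX q) (hy : iotaY p = iotaY q) :
    ∃ t : ℝ, alpha4 t p = q := by
  obtain ⟨p1, p2⟩ := p
  obtain ⟨q1, q2⟩ := q
  simp only [ne_eq, Prod.mk.injEq, not_and_or] at hp hq
  have hp0 : (0:ℝ) < p1 ^ 2 + p2 ^ 2 := by rcases hp with h | h <;> positivity
  have hq0 : (0:ℝ) < q1 ^ 2 + q2 ^ 2 := by rcases hq with h | h <;> positivity
  set rp := Real.sqrt (p1 ^ 2 + p2 ^ 2) with hrp_def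
  set rq := Real.sqrt (q1 ^ 2 + q2 ^ 2) with hrq_def
  have hrp : 0 < rp := Real.sqrt_pos.mpr hp0
  have hrq : 0 < rq := Real.sqrt_pos.mpr hq0
  have hrp2 : rp ^ 2 = p1 ^ 2 + p2 ^ 2 := Real.sq_sqrt hp0.le
  have hrq2 : rq ^ 2 = q1 ^ 2 + q2 ^ 2 := Real.sq_sqrt hq0.le
  set a := Real.log rp with ha
  set b := Real.log rq with hb
  refine ⟨b - a, ?_⟩
  have het : Real.exp (b - a) = rq / rp := by
    rw [Real.exp_sub, Real.exp_log hrq, Real.exp_log hrp]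
  simp only [iotaX, iotaY] at hx hy
  simp only [← hrp_def, ← hrq_def, ← ha, ← hb] at hx hy
  have hx' : rq * (p1 * Real.cos a + p2 * Real.sin a)
      = rp * (q1 * Real.cos b + q2 * Real.sin b) := by
    field_simp at hx; linarith [hx]
  have hy' : rq * (p2 * Real.cos a - p1 * Real.sin a)
      = rp * (q2 * Real.cos b - q1 * Real.sin b) := by
    field_simp at hy; linarith [hy]
  have hpb : Real.sin b ^ 2 + Real.cos b ^ 2 = 1 := Real.sin_sq_add_cos_sq b
  unfold alpha4
  simp only [het, Real.cos_sub, Real.sin_sub, Prod.mk.injEq]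
  constructor
  · rw [div_mul_eq_mul_div, div_eq_iff hrp.ne']
    linear_combination Real.cos b * hx' - Real.sin b * hy' + (rp * q1) * hpb
  · rw [div_mul_eq_mul_div, div_eq_iff hrp.ne']
    linear_combination Real.sin b * hx' + Real.cos b * hy' + (rp * q2) * hpb
end

section
/- Let q(p) = p⁴ + 1 and define H = q·q'' − (3/4)(q')², T = q²·q''' − (3/2)·q·q'·q'' + (3/4)(q')³, and V = q³·q'''' − q²·q'·q''' + (3/4)·q·(q')²·q'' − (9/32)(q')⁴ (the classifying invariants of binary quartics, m = 4, restricted to q). Then for every real p ≠ 0: T(p)²/H(p)³ = (p⁴ − 1)²/(3p⁴), V(p)/H(p)² = (p⁸ − p⁴ + 1)/(6p⁴), and consequently the signature point (T₁, T₂) = (T²/H³, V/H²) satisfies the linear relation 6T₂ − 3T₁ − 1 = 0. -/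
/-!
On `q = p⁴ + 1` the derivatives are polynomials, and the three covariants collapse to
`H = 12 p²`, `T = 24 p (1 - p⁴)`, `V = 24 (p⁸ - p⁴ + 1)`. The two invariants are then
rational functions of `p⁴`, and the linear relation is the identity
`(p⁸ - p⁴ + 1) - (p⁴ - 1)² = p⁴`.
-/

/-- The inhomogeneous counterpart q(p) = p⁴ + 1 of the binary quartic x⁴ + y⁴. -/
noncomputable def q18 : ℝ → ℝ := fun p => p ^ 4 + 1

/-- H = q·q'' − (3/4)(q')². -/
noncomputable def H18 (p : ℝ) : ℝ :=
  q18 p * deriv (deriv q18) p - (3 / 4) * (deriv q18 p) ^ 2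

/-- T = q²·q''' − (3/2)·q·q'·q'' + (3/4)(q')³. -/
noncomputable def T18 (p : ℝ) : ℝ :=
  q18 p ^ 2 * deriv (deriv (deriv q18)) p -
    (3 / 2) * q18 p * deriv q18 p * deriv (deriv q18) p +
    (3 / 4) * (deriv q18 p) ^ 3

/-- V = q³·q'''' − q²·q'·q''' + (3/4)·q·(q')²·q'' − (9/32)(q')⁴. -/
noncomputable def V18 (p : ℝ) : ℝ :=
  q18 p ^ 3 * deriv (deriv (deriv (deriv q18))) p -
    q18 p ^ 2 * deriv q18 p * deriv (deriv (deriv q18)) p +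
    (3 / 4) * q18 p * (deriv q18 p) ^ 2 * deriv (deriv q18) p -
    (9 / 32) * (deriv q18 p) ^ 4

lemma deriv_q18 : deriv q18 = fun p => 4 * p ^ 3 := by
  funext p
  change deriv (fun p : ℝ => p ^ 4 + 1) p = _
  simp

lemma deriv_deriv_q18 : deriv (deriv q18) = fun p => 12 * p ^ 2 := by
  funext p
  rw [deriv_q18]
  simp only [deriv_const_mul_field', deriv_pow_field]
  ring

lemma deriv_deriv_deriv_q18 : deriv (deriv (deriv q18)) = fun p => 24 * p := by
  funext p
  rw [deriv_deriv_q18]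
  simp only [deriv_const_mul_field', deriv_pow_field]
  ring

lemma deriv_deriv_deriv_deriv_q18 : deriv (deriv (deriv (deriv q18))) = fun _ => 24 := by
  funext p
  rw [deriv_deriv_deriv_q18]
  simp

lemma H18_eq (p : ℝ) : H18 p = 12 * p ^ 2 := by
  rw [H18, deriv_deriv_q18, deriv_q18, q18]
  ring

lemma T18_eq (p : ℝ) : T18 p = 24 * p * (1 - p ^ 4) := by
  rw [T18, deriv_deriv_deriv_q18, deriv_deriv_q18, deriv_q18, q18]
  ring

lemma V18_eq (p : ℝ) : V18 p = 24 * (p ^ 8 - p ^ 4 + 1) := by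
  rw [V18, deriv_deriv_deriv_deriv_q18, deriv_deriv_deriv_q18, deriv_deriv_q18, deriv_q18, q18]
  ring

/-- The signature of the binary quartic x⁴ + y⁴: explicit parametrization of the
classifying invariants (T₁, T₂) = (T²/H³, V/H²) and the linear signature relation
6T₂ − 3T₁ − 1 = 0. -/
theorem stmt_18 (p : ℝ) (hp : p ≠ 0) :
    T18 p ^ 2 / H18 p ^ 3 = (p ^ 4 - 1) ^ 2 / (3 * p ^ 4) ∧
    V18 p / H18 p ^ 2 = (p ^ 8 - p ^ 4 + 1) / (6 * p ^ 4) ∧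
    6 * (V18 p / H18 p ^ 2) - 3 * (T18 p ^ 2 / H18 p ^ 3) - 1 = 0 := by
  have hT₁ : T18 p ^ 2 / H18 p ^ 3 = (p ^ 4 - 1) ^ 2 / (3 * p ^ 4) := by
    rw [H18_eq, T18_eq]
    field_simp
    ring
  have hT₂ : V18 p / H18 p ^ 2 = (p ^ 8 - p ^ 4 + 1) / (6 * p ^ 4) := by
    rw [H18_eq, V18_eq]
    field_simp
    ring
  refine ⟨hT₁, hT₂, ?_⟩
  rw [hT₁, hT₂]
  field_simp
  ring
end
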